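/- Let p be a positive integer, k coprime to p, w = 2πk/p, and let a, b be integers with cos(w(a−b)/2) ≠ 0. Then over residues c ∈ {0,...,p−1}, the Pizza logit Q(c) = |cos(w(a−b)/2)| · cos(w(a+b−c)) is uniquely maximized at c ≡ a + b (mod p). -/

import Mathlib

/-!
Writing `w = 2πk/p`, the factor `|cos (w(a-b)/2)|` is positive, so it suffices to maximise
`cos (w(a+b-c))`. For an integer `n`, `cos (wn) = 1` exactly when `p ∣ kn`, i.e. when `p ∣ n`
since `k` is coprime to `p`. Among `0 ≤ c < p` this singles out the residue of `a + b`; everywhere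
else the cosine is strictly below `1`.
-/

open Real

theorem cos_two_pi_mul_div_mul_eq_one_iff {p : ℕ} (hp : p ≠ 0) {k : ℤ} (hk : IsCoprime (p : ℤ) k)
    (n : ℤ) : cos (2 * π * k / p * n) = 1 ↔ (p : ℤ) ∣ n := by
  have hp' : (p : ℝ) ≠ 0 := Nat.cast_ne_zero.mpr hp
  have h_angle (m : ℤ) : m * (2 * π) = 2 * π * k / p * n ↔ (p : ℤ) * m = k * n := by
    rw [← @Int.cast_inj ℝ]
    push_cast
    constructor <;> intro h
    · field_simp at h; linarith [pi_pos]
    · field_simp; linarith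
  rw [cos_eq_one_iff]
  constructor
  · rintro ⟨m, hm⟩
    exact hk.dvd_of_dvd_mul_left ⟨m, ((h_angle m).mp hm).symm⟩
  · rintro ⟨m, rfl⟩
    exact ⟨k * m, (h_angle _).mpr (by ring)⟩

theorem pizza_argmax_general (p : ℕ) (k : ℤ) (hk : Int.gcd k (p : ℤ) = 1)
    (a b : ℤ)
    (hab : Real.cos ((2 * Real.pi * k / p) * ((a : ℝ) - b) / 2) ≠ 0) :
    ∀ c ∈ Finset.range p, (c : ℤ) ≡ a + b [ZMOD (p : ℤ)] →
      ∀ c' ∈ Finset.range p, c' ≠ c →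
        |Real.cos ((2 * Real.pi * k / p) * ((a : ℝ) - b) / 2)| *
            Real.cos ((2 * Real.pi * k / p) * ((a : ℝ) + b - c')) <
          |Real.cos ((2 * Real.pi * k / p) * ((a : ℝ) - b) / 2)| *
            Real.cos ((2 * Real.pi * k / p) * ((a : ℝ) + b - c)) := by
  intro c hc hmod c' hc' hne
  rw [Finset.mem_range] at hc hc'
  have hp : p ≠ 0 := (c.zero_le.trans_lt hc).ne'
  have hcop : IsCoprime (p : ℤ) k := by
    rwa [Int.isCoprime_iff_gcd_eq_one, Int.gcd_comm]
  have hcos (n : ℕ) : cos (2 * π * k / p * ((a : ℝ) + b - n)) = 1 ↔ (p : ℤ) ∣ a + b - n := by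
    rw [← cos_two_pi_mul_div_mul_eq_one_iff hp hcop]
    push_cast
    rfl
  have hmax : cos (2 * π * k / p * ((a : ℝ) + b - c)) = 1 := (hcos c).mpr hmod.dvd
  have hlt : cos (2 * π * k / p * ((a : ℝ) + b - c')) < 1 := by
    refine (cos_le_one _).lt_of_ne fun h => hne ?_
    have hc'c : (c' : ℤ) ≡ c [ZMOD p] := (Int.modEq_iff_dvd.mpr ((hcos c').mp h)).trans hmod.symm
    exact (Int.natCast_modEq_iff.mp hc'c).eq_of_lt_of_lt hc' hc
  rw [hmax, mul_one]
  exact mul_lt_of_lt_one_right (abs_pos.mpr hab) hlt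

theorem pizza_argmax (p : ℕ) (hp : 0 < p) (k : ℤ) (hk : Int.gcd k (p : ℤ) = 1)
    (a b : ℤ)
    (hab : Real.cos ((2 * Real.pi * k / p) * ((a : ℝ) - b) / 2) ≠ 0) :
    ∀ c ∈ Finset.range p, (c : ℤ) ≡ a + b [ZMOD (p : ℤ)] →
      ∀ c' ∈ Finset.range p, c' ≠ c →
        |Real.cos ((2 * Real.pi * k / p) * ((a : ℝ) - b) / 2)| *
            Real.cos ((2 * Real.pi * k / p) * ((a : ℝ) + b - c')) <
          |Real.cos ((2 * Real.pi * k / p) * ((a : ℝ) - b) / 2)| *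
            Real.cos ((2 * Real.pi * k / p) * ((a : ℝ) + b - c)) :=
  pizza_argmax_general p k hk a b hab
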